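/- arXiv:1710.10610 — 2 statements merged into one kernel-verified Lean document; each statement's English description precedes it below -/
import Mathlib

section
/- Let δ be a locally nilpotent derivation of the trinomial algebra R(g) that is homogeneous with respect to the K-grading defined by deg T_{ij} = Q(e_{ij}), where Q : Z^n → Z^n/Im(L*) is the projection. Then for each i = 0,1,2 there is at most one index j ∈ {1,...,n_i} with δ(T_{ij}) ≠ 0. -/
open MvPolynomial
set_option synthInstance.maxHeartbeats 1000000
set_option maxHeartbeats 1000000

/-- Index set of the variables `T_{ij}`, `i = 0,1,2`, `j = 1,…,n_i`. -/
abbrev TrinIdx (n : Fin 3 → ℕ) : Type := Σ i : Fin 3, Fin (n i)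

/-- The trinomial `g = T₀^{l₀} + T₁^{l₁} + T₂^{l₂}` where
`T_i^{l_i} = ∏_j T_{ij}^{l_{ij}}`. -/
noncomputable def trinomial (K : Type*) [Field K] (n : Fin 3 → ℕ)
    (l : ∀ i : Fin 3, Fin (n i) → ℕ) : MvPolynomial (TrinIdx n) K :=
  ∑ i : Fin 3, ∏ j : Fin (n i), X (⟨i, j⟩ : TrinIdx n) ^ l i j

/-- The trinomial algebra `R(g) = K[T_{ij}]/(g)`. -/
abbrev TrinAlg (K : Type*) [Field K] (n : Fin 3 → ℕ) (l : ∀ i : Fin 3, Fin (n i) → ℕ) :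
    Type _ :=
  MvPolynomial (TrinIdx n) K ⧸ Ideal.span {trinomial K n l}

/-- The `k`-th row (`k = 1, 2`) of the matrix `L` with rows `(-l₀, l₁, 0)` and `(-l₀, 0, l₂)`,
viewed as an element of `ℤⁿ`. -/
def trinRow (n : Fin 3 → ℕ) (l : ∀ i : Fin 3, Fin (n i) → ℕ) (k : Fin 3) :
    TrinIdx n → ℤ :=
  fun x => if x.1 = 0 then -(l x.1 x.2 : ℤ) else if x.1 = k then (l x.1 x.2 : ℤ) else 0

/-- The grading group `K_gr = ℤⁿ / Im(L*)`. -/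
abbrev TrinGradeGroup (n : Fin 3 → ℕ) (l : ∀ i : Fin 3, Fin (n i) → ℕ) : Type _ :=
  (TrinIdx n → ℤ) ⧸ Submodule.span ℤ {trinRow n l 1, trinRow n l 2}

/-- The projection `Q : ℤⁿ → ℤⁿ / Im(L*)`. -/
def trinQ (n : Fin 3 → ℕ) (l : ∀ i : Fin 3, Fin (n i) → ℕ) (v : TrinIdx n → ℤ) :
    TrinGradeGroup n l :=
  Submodule.Quotient.mk v

/-- The degree `deg T_{ij} = Q(e_{ij})` of the generator `T_{ij}`. -/
noncomputable def trinDeg (n : Fin 3 → ℕ) (l : ∀ i : Fin 3, Fin (n i) → ℕ) (x : TrinIdx n) :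
    TrinGradeGroup n l :=
  trinQ n l (Pi.single x 1)

/-- The degree of a monomial with exponent vector `m`, with respect to a weight function
`w` on the variables taking values in an abelian group `A`. -/
def monWeight {A : Type*} [AddCommGroup A] {n : Fin 3 → ℕ} (w : TrinIdx n → A)
    (m : TrinIdx n →₀ ℕ) : A :=
  ∑ x ∈ m.support, m x • w x

/-- `f ∈ R(g)` is homogeneous of degree `d` with respect to the weights `w` if it is the image
of a polynomial all of whose monomials have `w`-degree `d`. -/
def IsHomog (K : Type*) [Field K] {n : Fin 3 → ℕ} (l : ∀ i : Fin 3, Fin (n i) → ℕ)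
    {A : Type*} [AddCommGroup A] (w : TrinIdx n → A) (f : TrinAlg K n l) (d : A) : Prop :=
  ∃ p : MvPolynomial (TrinIdx n) K,
    Ideal.Quotient.mk (Ideal.span {trinomial K n l}) p = f ∧
      ∀ m ∈ p.support, monWeight w m = d

/-- A derivation of `R(g)` is homogeneous w.r.t. the weights `w` if it shifts `w`-degrees by a
fixed element. -/
def IsHomogDer (K : Type*) [Field K] {n : Fin 3 → ℕ} (l : ∀ i : Fin 3, Fin (n i) → ℕ)
    {A : Type*} [AddCommGroup A] (w : TrinIdx n → A)
    (δ : Derivation K (TrinAlg K n l) (TrinAlg K n l)) : Prop :=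
  ∃ d : A, ∀ (e : A) (f : TrinAlg K n l), IsHomog K l w f e → IsHomog K l w (δ f) (e + d)

/-- A derivation is locally nilpotent if every element is annihilated by some power of it. -/
def IsLND (K : Type*) [Field K] {n : Fin 3 → ℕ} (l : ∀ i : Fin 3, Fin (n i) → ℕ)
    (δ : Derivation K (TrinAlg K n l) (TrinAlg K n l)) : Prop :=
  ∀ f : TrinAlg K n l, ∃ m : ℕ, (δ.toLinearMap ^ m) f = 0

/-!
`g` is prime, by Eisenstein's criterion in a variable of `T_0^{l_0}` at a prime factor of the
squarefree binomial `T_1^{l_1} + T_2^{l_2}`. So `R(g)` is a domain of characteristic zero, and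
there a locally nilpotent derivation with `δ a ∈ a R(g)` has `δ a = 0`. Hence if `δ T_ij ≠ 0`,
then `δ T_ij`, of degree `deg T_ij + d`, has a monomial `T^m` with `m_ij = 0`, i.e.
`Q(m) = Q(e_ij) + d`. The rows of `L` are proportional to `l_i` on the `i`-th block, so
`v ↦ l_ij' v_ij - l_ij v_ij'` descends to `K_gr`; evaluated on the relations obtained for two
indices `j ≠ j'` it yields a contradiction.
-/

namespace Derivation

open Finset

variable {R A : Type*} [CommRing R] [CommRing A] [Algebra R A]

theorem iterate_leibniz (D : Derivation R A A) (n : ℕ) (a b : A) :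
    D^[n] (a * b) = ∑ ij ∈ antidiagonal n, n.choose ij.1 • (D^[ij.1] a * D^[ij.2] b) := by
  induction n with
  | zero => simp
  | succ n ih =>
    rw [sum_antidiagonal_choose_succ_nsmul (M := A) (fun i j => D^[i] a * D^[j] b) n]
    simp only [Function.iterate_succ_apply', ih, map_sum, map_nsmul, leibniz, smul_eq_mul,
      smul_add, sum_add_distrib]
    congr 1
    refine sum_congr rfl fun ⟨i, j⟩ hij => ?_
    rw [n.choose_symm_of_eq_add (mem_antidiagonal.1 hij).symm]
    ring

theorem iterate_eq_zero_of_le (D : Derivation R A A) {a : A} {k m : ℕ} (hk : D^[k] a = 0)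
    (hkm : k ≤ m) : D^[m] a = 0 := by
  obtain ⟨r, rfl⟩ := Nat.exists_eq_add_of_le hkm
  rw [add_comm, Function.iterate_add_apply, hk, iterate_map_zero]

theorem exists_iterate_ne_zero_and_succ_eq_zero (D : Derivation R A A) {a : A} (ha : a ≠ 0)
    {m : ℕ} (hm : D^[m] a = 0) : ∃ p, D^[p] a ≠ 0 ∧ D^[p + 1] a = 0 := by
  induction m with
  | zero => exact absurd hm ha
  | succ m ih => exact (em (D^[m] a = 0)).elim ih fun h => ⟨m, h, hm⟩

theorem apply_eq_zero_of_apply_eq_mul [IsDomain A] [CharZero A] (D : Derivation R A A)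
    (hD : ∀ f : A, ∃ m, D^[m] f = 0) {a h : A} (hah : D a = a * h) : D a = 0 := by
  by_contra hDa
  have ha : a ≠ 0 := by rintro rfl; exact hDa (by simp)
  have hh : h ≠ 0 := by rintro rfl; exact hDa (by simpa using hah)
  obtain ⟨p, hp, hp1⟩ := D.exists_iterate_ne_zero_and_succ_eq_zero ha (hD a).choose_spec
  obtain ⟨q, hq, hq1⟩ := D.exists_iterate_ne_zero_and_succ_eq_zero hh (hD h).choose_spec
  have hsum : D^[p + q] (a * h) = (p + q).choose p • (D^[p] a * D^[q] h) := by
    rw [iterate_leibniz, sum_eq_single_of_mem (p, q) (HasAntidiagonal.mem_antidiagonal.2 rfl)]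
    rintro ⟨i, j⟩ hij hne
    rw [HasAntidiagonal.mem_antidiagonal] at hij
    rcases lt_trichotomy i p with hi | rfl | hi
    · rw [D.iterate_eq_zero_of_le hq1 (by omega), mul_zero, smul_zero]
    · exact absurd (by rw [show j = q by omega]) hne
    · rw [D.iterate_eq_zero_of_le hp1 hi, zero_mul, smul_zero]
  have hzero : D^[p + q] (a * h) = 0 := by
    rw [← hah, ← Function.iterate_succ_apply, D.iterate_eq_zero_of_le hp1 (by omega)]
  rw [hsum, nsmul_eq_mul] at hzero
  exact mul_ne_zero (Nat.cast_ne_zero.2 (Nat.choose_pos (Nat.le_add_right p q)).ne')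
    (mul_ne_zero hp hq) hzero

theorem squarefree_of_isRelPrime (D : Derivation R A A) {c : A} (hc : IsRelPrime c (D c)) :
    Squarefree c := by
  rintro r ⟨t, rfl⟩
  refine hc (dvd_mul_of_dvd_left (dvd_mul_right r r) t) ?_
  rw [mul_assoc, D.leibniz, smul_eq_mul, smul_eq_mul, mul_assoc]
  exact dvd_add (dvd_mul_right r _) (dvd_mul_right r _)

end Derivation

namespace Polynomial

theorem irreducible_C_mul_X_pow_add_C {R : Type*} [CommRing R] [IsDomain R]
    [UniqueFactorizationMonoid R] {m c : R} {e : ℕ} (he : 0 < e) (hc : Squarefree c)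
    (hcu : ¬ IsUnit c) (hmc : IsRelPrime m c) : Irreducible (C m * X ^ e + C c) := by
  have hm : m ≠ 0 := by rintro rfl; exact hcu (isRelPrime_zero_left.1 hmc)
  obtain ⟨π, hπ, hπc⟩ := WfDvdMonoid.exists_irreducible_factor hcu hc.ne_zero
  have hπm : ¬ π ∣ m := fun h => hπ.not_isUnit (hmc h hπc)
  have hdeg : (C m * X ^ e + C c).degree = (e : WithBot ℕ) := by
    rw [degree_add_eq_left_of_degree_lt] <;> rw [degree_C_mul_X_pow e hm]
    exact degree_C_le.trans_lt (by exact_mod_cast he)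
  have hcoeff (k : ℕ) :
      (C m * X ^ e + C c).coeff k = (if k = e then m else 0) + if k = 0 then c else 0 := by
    simp only [coeff_add, coeff_C_mul, coeff_X_pow, coeff_C, mul_ite, mul_one, mul_zero]
  refine irreducible_of_eisenstein_criterion (P := Ideal.span {π})
    ((Ideal.span_singleton_prime hπ.ne_zero).2 hπ.prime) ?_ ?_ ?_ ?_ ?_
  · rw [leadingCoeff, natDegree_eq_of_degree_eq_some hdeg, hcoeff, if_pos rfl, if_neg he.ne',
      add_zero, Ideal.mem_span_singleton]
    exact hπm
  · intro k hk
    rw [hdeg, Nat.cast_lt] at hk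
    rw [hcoeff, if_neg hk.ne, zero_add]
    split_ifs
    · exact Ideal.mem_span_singleton.2 hπc
    · exact zero_mem _
  · rw [hdeg]; exact_mod_cast he
  · rw [hcoeff, if_neg he.ne, if_pos rfl, zero_add, Ideal.span_singleton_pow,
      Ideal.mem_span_singleton, pow_two]
    exact fun h => hπ.not_isUnit (hc π h)
  · intro r hr
    rw [C_dvd_iff_dvd_coeff] at hr
    have hrm := hr e
    have hrc := hr 0
    rw [hcoeff, if_pos rfl, if_neg he.ne', add_zero] at hrm
    rw [hcoeff, if_neg he.ne, if_pos rfl, zero_add] at hrc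
    exact hmc hrm hrc

end Polynomial

namespace MvPolynomial

variable {σ K : Type*} [Field K] {s t : σ →₀ ℕ}

theorem _root_.Finsupp.ne_of_disjoint_support (hst : Disjoint s.support t.support) (hs : s ≠ 0) :
    s ≠ t := by
  rintro rfl
  exact hs (Finsupp.support_eq_empty.1 (disjoint_self.1 hst))

theorem not_X_dvd_monomial_add_monomial_of_notMem (hst : s ≠ t) {v : σ} (hv : v ∉ s.support) :
    ¬ X v ∣ monomial s (1 : K) + monomial t 1 := by
  classical
  rintro ⟨q, hq⟩
  have hs := congrArg (coeff s) hq
  rw [coeff_X_mul', if_neg hv, coeff_add, coeff_monomial, coeff_monomial, if_pos rfl,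
    if_neg hst.symm, add_zero] at hs
  exact one_ne_zero hs

theorem not_X_dvd_monomial_add_monomial (hst : Disjoint s.support t.support) (hs : s ≠ 0)
    (v : σ) : ¬ X v ∣ monomial s (1 : K) + monomial t 1 := by
  have hne := Finsupp.ne_of_disjoint_support hst hs
  by_cases hv : v ∈ s.support
  · rw [add_comm]
    exact not_X_dvd_monomial_add_monomial_of_notMem hne.symm (Finset.disjoint_left.1 hst hv)
  · exact not_X_dvd_monomial_add_monomial_of_notMem hne hv

theorem isRelPrime_monomial_of_forall_not_X_dvd {c : MvPolynomial σ K} (hc : ∀ v, ¬ X v ∣ c)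
    (s : σ →₀ ℕ) {a : K} (ha : a ≠ 0) : IsRelPrime (monomial s a) c := by
  rw [monomial_eq, isRelPrime_mul_unit_left_left (ha.isUnit.map C)]
  exact IsRelPrime.prod_left fun v _ =>
    IsRelPrime.pow_left (X_prime.irreducible.isRelPrime_iff_not_dvd.2 (hc v))

theorem not_isUnit_monomial_add_monomial (hst : s ≠ t) (hs : s ≠ 0) :
    ¬ IsUnit (monomial s (1 : K) + monomial t 1) := by
  classical
  rw [isUnit_iff_eq_C_of_isReduced]
  rintro ⟨r, -, h⟩
  have h' := congrArg (coeff s) h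
  rw [coeff_add, coeff_monomial, coeff_monomial, if_pos rfl, if_neg hst.symm, add_zero, coeff_C,
    if_neg hs.symm] at h'
  exact one_ne_zero h'

theorem squarefree_monomial_add_monomial [CharZero K] (hst : Disjoint s.support t.support)
    (hs : s ≠ 0) : Squarefree (monomial s (1 : K) + monomial t 1) := by
  obtain ⟨w, hw⟩ := Finsupp.support_nonempty_iff.2 hs
  have htw : t w = 0 := Finsupp.notMem_support_iff.1 (Finset.disjoint_left.1 hst hw)
  -- The Euler operator `X w ∂/∂w` multiplies `monomial s 1` by `s w ≠ 0` and kills `monomial t 1`.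
  refine ((X w : MvPolynomial σ K) • pderiv w :
    Derivation K (MvPolynomial σ K) _).squarefree_of_isRelPrime ?_
  rw [Derivation.smul_apply, smul_eq_mul, map_add, mul_add, X_mul_pderiv_monomial,
    X_mul_pderiv_monomial, htw, zero_smul, add_zero, smul_monomial, Nat.smul_one_eq_cast]
  exact (isRelPrime_monomial_of_forall_not_X_dvd (not_X_dvd_monomial_add_monomial hst hs) s
    (Nat.cast_ne_zero.2 (Finsupp.mem_support_iff.1 hw))).symm

theorem optionEquivLeft_rename_optionSubtypeNe_monomial [DecidableEq σ] (x₀ : σ) (s : σ →₀ ℕ)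
    (a : K) :
    optionEquivLeft K {v // v ≠ x₀} (rename (Equiv.optionSubtypeNe x₀).symm (monomial s a)) =
      Polynomial.monomial (s x₀) (monomial (s.subtypeDomain (· ≠ x₀)) a) := by
  have hsome : (s.mapDomain (Equiv.optionSubtypeNe x₀).symm).some = s.subtypeDomain (· ≠ x₀) :=
    Finsupp.ext fun v => by
      rw [Finsupp.some_apply, Finsupp.mapDomain_equiv_apply, Finsupp.subtypeDomain_apply]
      rfl
  rw [rename_monomial, optionEquivLeft_monomial, Finsupp.mapDomain_equiv_apply, hsome]
  rfl

theorem subtypeDomain_ne_zero {x₀ : σ} (hs : s ≠ 0) (hx₀ : s x₀ = 0) :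
    s.subtypeDomain (· ≠ x₀) ≠ 0 := by
  obtain ⟨v, hv⟩ := Finsupp.support_nonempty_iff.2 hs
  have hvx₀ : v ≠ x₀ := by rintro rfl; exact Finsupp.mem_support_iff.1 hv hx₀
  intro h
  exact Finsupp.mem_support_iff.1 hv (by simpa using DFunLike.congr_fun h ⟨v, hvx₀⟩)

theorem disjoint_support_subtypeDomain (hst : Disjoint s.support t.support)
    (p : σ → Prop) [DecidablePred p] :
    Disjoint (s.subtypeDomain p).support (t.subtypeDomain p).support :=
  Finset.disjoint_left.2 fun _ hs ht =>
    Finset.disjoint_left.1 hst (by simpa using hs) (by simpa using ht)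

theorem prime_monomial_add_monomial_add_monomial [CharZero K] {s₀ s₁ s₂ : σ →₀ ℕ}
    (h₀₁ : Disjoint s₀.support s₁.support) (h₀₂ : Disjoint s₀.support s₂.support)
    (h₁₂ : Disjoint s₁.support s₂.support) (h₀ : s₀ ≠ 0) (h₁ : s₁ ≠ 0) :
    Prime (monomial s₀ (1 : K) + monomial s₁ 1 + monomial s₂ 1) := by
  classical
  obtain ⟨x₀, hx₀⟩ := Finsupp.support_nonempty_iff.2 h₀
  have hx₁ : s₁ x₀ = 0 := Finsupp.notMem_support_iff.1 (Finset.disjoint_left.1 h₀₁ hx₀)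
  have hx₂ : s₂ x₀ = 0 := Finsupp.notMem_support_iff.1 (Finset.disjoint_left.1 h₀₂ hx₀)
  set Φ := (renameEquiv K (Equiv.optionSubtypeNe x₀).symm).trans
    (optionEquivLeft K {v // v ≠ x₀})
  have hΦ (s : σ →₀ ℕ) :
      Φ (monomial s 1) = .monomial (s x₀) (monomial (s.subtypeDomain (· ≠ x₀)) 1) :=
    optionEquivLeft_rename_optionSubtypeNe_monomial x₀ s (1 : K)
  have hc := disjoint_support_subtypeDomain h₁₂ (· ≠ x₀)
  have hs₁ := subtypeDomain_ne_zero h₁ hx₁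
  rw [← MulEquiv.prime_iff Φ, map_add, map_add, hΦ, hΦ, hΦ, hx₁, hx₂,
    Polynomial.monomial_zero_left, Polynomial.monomial_zero_left,
    ← Polynomial.C_mul_X_pow_eq_monomial, add_assoc, ← map_add]
  exact (Polynomial.irreducible_C_mul_X_pow_add_C (Nat.pos_of_ne_zero
    (Finsupp.mem_support_iff.1 hx₀)) (squarefree_monomial_add_monomial hc hs₁)
    (not_isUnit_monomial_add_monomial (Finsupp.ne_of_disjoint_support hc hs₁) hs₁)
    (isRelPrime_monomial_of_forall_not_X_dvd (not_X_dvd_monomial_add_monomial hc hs₁) _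
      one_ne_zero)).prime

end MvPolynomial

section Trinomial

variable {K : Type*} [Field K] {n : Fin 3 → ℕ} {l : ∀ i : Fin 3, Fin (n i) → ℕ}

variable (n l) in
/-- The exponent vector of the monomial `T_i^{l_i}`. -/
noncomputable def blockExp (i : Fin 3) : TrinIdx n →₀ ℕ :=
  Finsupp.equivFunOnFinite.symm fun x => if x.1 = i then l x.1 x.2 else 0

theorem blockExp_apply (i : Fin 3) (x : TrinIdx n) :
    blockExp n l i x = if x.1 = i then l x.1 x.2 else 0 := rfl

theorem prod_X_pow_eq_monomial_blockExp (i : Fin 3) :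
    ∏ j : Fin (n i), X (⟨i, j⟩ : TrinIdx n) ^ l i j = monomial (blockExp n l i) (1 : K) := by
  rw [monomial_eq, C_1, one_mul, Finsupp.prod_fintype _ _ fun _ => pow_zero _,
    Fintype.prod_sigma, Fintype.prod_eq_single i fun i' hi' => by simp [blockExp_apply, hi']]
  simp [blockExp_apply]

theorem trinomial_eq_sum_monomial_blockExp :
    trinomial K n l = monomial (blockExp n l 0) 1 + monomial (blockExp n l 1) 1 +
      monomial (blockExp n l 2) 1 := by
  simp only [trinomial, Fin.sum_univ_three, prod_X_pow_eq_monomial_blockExp]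

theorem fst_eq_of_mem_support_blockExp {i : Fin 3} {x : TrinIdx n}
    (hx : x ∈ (blockExp n l i).support) : x.1 = i := by
  rw [Finsupp.mem_support_iff, blockExp_apply] at hx
  exact by_contra fun h => hx (if_neg h)

theorem disjoint_support_blockExp {i i' : Fin 3} (h : i ≠ i') :
    Disjoint (blockExp n l i).support (blockExp n l i').support :=
  Finset.disjoint_left.2 fun _ hx hx' =>
    h ((fst_eq_of_mem_support_blockExp hx).symm.trans (fst_eq_of_mem_support_blockExp hx'))

theorem blockExp_ne_zero {i : Fin 3} (j : Fin (n i)) (hj : 0 < l i j) : blockExp n l i ≠ 0 :=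
  fun h => hj.ne' (by simpa [blockExp_apply] using DFunLike.congr_fun h ⟨i, j⟩)

theorem trinomial_prime [CharZero K] (hn₀ : 0 < n 0) (hn₁ : 0 < n 1) (hl : ∀ i j, 0 < l i j) :
    Prime (trinomial K n l) := by
  rw [trinomial_eq_sum_monomial_blockExp]
  exact prime_monomial_add_monomial_add_monomial (disjoint_support_blockExp (by decide))
    (disjoint_support_blockExp (by decide)) (disjoint_support_blockExp (by decide))
    (blockExp_ne_zero ⟨0, hn₀⟩ (hl _ _)) (blockExp_ne_zero ⟨0, hn₁⟩ (hl _ _))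

theorem isDomain_trinAlg [CharZero K] (hn₀ : 0 < n 0) (hn₁ : 0 < n 1) (hl : ∀ i j, 0 < l i j) :
    IsDomain (TrinAlg K n l) :=
  have hg := trinomial_prime (K := K) hn₀ hn₁ hl
  (Ideal.Quotient.isDomain_iff_prime _).2 ((Ideal.span_singleton_prime hg.ne_zero).2 hg)

end Trinomial

section Grading

variable {K : Type*} [Field K] {n : Fin 3 → ℕ} {l : ∀ i : Fin 3, Fin (n i) → ℕ}

theorem monWeight_single_one {A : Type*} [AddCommGroup A] (w : TrinIdx n → A) (x : TrinIdx n) :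
    monWeight w (Finsupp.single x 1) = w x := by
  simp [monWeight]

theorem isHomog_mk_X {A : Type*} [AddCommGroup A] (w : TrinIdx n → A) (x : TrinIdx n) :
    IsHomog K l w (Ideal.Quotient.mk _ (X x)) (w x) :=
  ⟨X x, rfl, fun m hm => by
    rw [support_X, Finset.mem_singleton] at hm
    rw [hm, monWeight_single_one]⟩

theorem exists_monWeight_eq_of_apply_mk_X_ne_zero [IsDomain (TrinAlg K n l)]
    [CharZero (TrinAlg K n l)] {A : Type*} [AddCommGroup A] {w : TrinIdx n → A} {d : A}
    {δ : Derivation K (TrinAlg K n l) (TrinAlg K n l)} (hln : IsLND K l δ)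
    (hd : ∀ e f, IsHomog K l w f e → IsHomog K l w (δ f) (e + d)) {x : TrinIdx n}
    (hx : δ (Ideal.Quotient.mk _ (X x)) ≠ 0) :
    ∃ m : TrinIdx n →₀ ℕ, m x = 0 ∧ monWeight w m = w x + d := by
  obtain ⟨p, hp, hpw⟩ := hd _ _ (isHomog_mk_X (K := K) (l := l) w x)
  suffices ∃ m ∈ p.support, m x = 0 by
    obtain ⟨m, hm, hmx⟩ := this
    exact ⟨m, hmx, hpw m hm⟩
  by_contra! hp0
  obtain ⟨q, rfl⟩ : X x ∣ p := by
    rw [← p.support_sum_monomial_coeff]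
    exact Finset.dvd_sum fun m hm => X_dvd_monomial.2 (Or.inr (hp0 m hm))
  refine hx (δ.apply_eq_zero_of_apply_eq_mul (fun f => ?_) (h := Ideal.Quotient.mk _ q) ?_)
  · obtain ⟨k, hk⟩ := hln f
    exact ⟨k, by rwa [Module.End.pow_apply] at hk⟩
  · rw [← map_mul, hp]

end Grading

section BlockCross

variable {n : Fin 3 → ℕ}

variable (l : ∀ i : Fin 3, Fin (n i) → ℕ)

def blockCross (i : Fin 3) (j j' : Fin (n i)) : (TrinIdx n → ℤ) →ₗ[ℤ] ℤ :=
  (l i j' : ℤ) • LinearMap.proj ⟨i, j⟩ - (l i j : ℤ) • LinearMap.proj ⟨i, j'⟩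

theorem blockCross_apply (i : Fin 3) (j j' : Fin (n i)) (v : TrinIdx n → ℤ) :
    blockCross l i j j' v = l i j' * v ⟨i, j⟩ - l i j * v ⟨i, j'⟩ := rfl

theorem blockCross_trinRow (i : Fin 3) (j j' : Fin (n i)) (k : Fin 3) :
    blockCross l i j j' (trinRow n l k) = 0 := by
  rw [blockCross_apply, trinRow, trinRow]
  split_ifs <;> ring

def gradeCross (i : Fin 3) (j j' : Fin (n i)) : TrinGradeGroup n l →ₗ[ℤ] ℤ :=
  Submodule.liftQ _ (blockCross l i j j') <| Submodule.span_le.2 <| by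
    rintro _ (rfl | rfl | _) <;> exact blockCross_trinRow l i j j' _

theorem gradeCross_trinQ (i : Fin 3) (j j' : Fin (n i)) (v : TrinIdx n → ℤ) :
    gradeCross l i j j' (trinQ n l v) = blockCross l i j j' v := rfl

theorem monWeight_trinDeg (m : TrinIdx n →₀ ℕ) :
    monWeight (trinDeg n l) m = trinQ n l fun x => (m x : ℤ) := by
  have hsum :
      ∑ x ∈ m.support, (m x : ℤ) • (Pi.single x 1 : TrinIdx n → ℤ) = fun x => (m x : ℤ) := by
    funext y
    by_cases hy : m y = 0 <;> simp [Finset.sum_apply, Pi.single_apply, hy]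
  rw [monWeight, ← hsum, trinQ, ← Submodule.mkQ_apply, map_sum]
  refine Finset.sum_congr rfl fun x _ => ?_
  rw [map_zsmul, natCast_zsmul]
  rfl

variable {l} {i : Fin 3} {j j' : Fin (n i)}

theorem gradeCross_monWeight_trinDeg (m : TrinIdx n →₀ ℕ) :
    gradeCross l i j j' (monWeight (trinDeg n l) m) = l i j' * m ⟨i, j⟩ - l i j * m ⟨i, j'⟩ := by
  rw [monWeight_trinDeg, gradeCross_trinQ, blockCross_apply]

theorem gradeCross_trinDeg_left (h : j ≠ j') :
    gradeCross l i j j' (trinDeg n l ⟨i, j⟩) = l i j' := by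
  simp [trinDeg, gradeCross_trinQ, blockCross_apply, Ne.symm h]

theorem gradeCross_trinDeg_right (h : j ≠ j') :
    gradeCross l i j j' (trinDeg n l ⟨i, j'⟩) = -l i j := by
  simp [trinDeg, gradeCross_trinQ, blockCross_apply, h]

end BlockCross

theorem lnd_at_most_one_variable_not_in_kernel_general (K : Type*) [Field K]
    [CharZero K] (n : Fin 3 → ℕ) (l : ∀ i : Fin 3, Fin (n i) → ℕ)
    (hn : ∀ i, 0 < n i) (hl : ∀ i j, 0 < l i j)
    (δ : Derivation K (TrinAlg K n l) (TrinAlg K n l))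
    (hln : IsLND K l δ) (hhom : IsHomogDer K l (trinDeg n l) δ) :
    ∀ i : Fin 3, ∀ j j' : Fin (n i),
      δ (Ideal.Quotient.mk (Ideal.span {trinomial K n l}) (X (⟨i, j⟩ : TrinIdx n))) ≠ 0 →
      δ (Ideal.Quotient.mk (Ideal.span {trinomial K n l}) (X (⟨i, j'⟩ : TrinIdx n))) ≠ 0 →
      j = j' := by
  intro i j j' hj hj'
  by_contra hjj
  have := isDomain_trinAlg (K := K) (l := l) (hn 0) (hn 1) hl
  have : CharZero (TrinAlg K n l) := charZero_of_injective_algebraMap (algebraMap K _).injective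
  obtain ⟨d, hd⟩ := hhom
  obtain ⟨m, hm0, hm⟩ := exists_monWeight_eq_of_apply_mk_X_ne_zero hln hd hj
  obtain ⟨m', hm0', hm'⟩ := exists_monWeight_eq_of_apply_mk_X_ne_zero hln hd hj'
  have h := congrArg (gradeCross l i j j') hm
  have h' := congrArg (gradeCross l i j j') hm'
  rw [map_add, gradeCross_monWeight_trinDeg, gradeCross_trinDeg_left hjj, hm0,
    Nat.cast_zero, mul_zero, zero_sub] at h
  rw [map_add, gradeCross_monWeight_trinDeg, gradeCross_trinDeg_right hjj, hm0',
    Nat.cast_zero, mul_zero, sub_zero] at h'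
  -- `h`, `h'` say `l_ij m_ij' + l_ij' m'_ij = -(l_ij + l_ij')`: nonnegative equals negative.
  linarith [Int.natCast_pos.2 (hl i j), Int.natCast_pos.2 (hl i j'),
    mul_nonneg (Int.natCast_nonneg (l i j)) (Int.natCast_nonneg (m ⟨i, j'⟩)),
    mul_nonneg (Int.natCast_nonneg (l i j')) (Int.natCast_nonneg (m' ⟨i, j⟩))]

/-- If `δ` is a locally nilpotent derivation of `R(g)` homogeneous with respect to the finest
grading `deg T_{ij} = Q(e_{ij})`, then each monomial `T_i^{l_i}` contains at most one
variable `T_{ij}` with `δ(T_{ij}) ≠ 0`. -/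
theorem lnd_at_most_one_variable_not_in_kernel (K : Type*) [Field K] [IsAlgClosed K]
    [CharZero K] (n : Fin 3 → ℕ) (l : ∀ i : Fin 3, Fin (n i) → ℕ)
    (hn : ∀ i, 0 < n i) (hl : ∀ i j, 0 < l i j)
    (δ : Derivation K (TrinAlg K n l) (TrinAlg K n l))
    (hln : IsLND K l δ) (hhom : IsHomogDer K l (trinDeg n l) δ) :
    ∀ i : Fin 3, ∀ j j' : Fin (n i),
      δ (Ideal.Quotient.mk (Ideal.span {trinomial K n l}) (X (⟨i, j⟩ : TrinIdx n))) ≠ 0 →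
      δ (Ideal.Quotient.mk (Ideal.span {trinomial K n l}) (X (⟨i, j'⟩ : TrinIdx n))) ≠ 0 →
      j = j' :=
  lnd_at_most_one_variable_not_in_kernel_general K n l hn hl δ hln hhom
end

section
/- Let g be a trinomial such that some exponent l_{ij} equals 1. Then the trinomial algebra R(g) admits a nonzero locally nilpotent derivation that is homogeneous with respect to the finest grading by Z^n/Im(L*). -/
open MvPolynomial
set_option synthInstance.maxHeartbeats 1000000
set_option maxHeartbeats 1000000

/-!
Let `l_{ij} = 1`, put `t = T_{ij}` and pick a variable `u` of another block. The Jacobian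
derivation `f ↦ ∂g/∂u · ∂f/∂t - ∂g/∂t · ∂f/∂u` kills `g`, so it descends to `R(g)`, and it is
homogeneous because `g` is. Since `∂g/∂t = T_i^{l_i} / t` involves neither `t` nor `u` and `∂g/∂u`
does not involve `t`, it is triangular, hence locally nilpotent. It is nonzero on `R(g)` since
`∂g/∂t` is a nonzero polynomial free of `t`, whereas every nonzero multiple of `g` involves `t`.
-/
namespace Derivation

section NilSubalgebra

variable {R A : Type*} [CommSemiring R] [CommSemiring A] [Algebra R A] (D : Derivation R A A)

theorem pow_apply_succ (k : ℕ) (a : A) :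
    (D.toLinearMap ^ (k + 1)) a = (D.toLinearMap ^ k) (D a) := by
  rw [pow_succ, Module.End.mul_apply]; rfl

theorem pow_apply_mul_eq_zero {i j : ℕ} {a b : A} (ha : (D.toLinearMap ^ i) a = 0)
    (hb : (D.toLinearMap ^ j) b = 0) : (D.toLinearMap ^ (i + j)) (a * b) = 0 := by
  induction hn : i + j generalizing i j a b with
  | zero =>
    obtain ⟨rfl, rfl⟩ : i = 0 ∧ j = 0 := by omega
    simp_all
  | succ n ih =>
    obtain _ | i := i
    · simp_all
    obtain _ | j := j
    · simp_all
    rw [pow_apply_succ] at ha hb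
    rw [pow_apply_succ, leibniz, smul_eq_mul, smul_eq_mul, map_add,
      ih (i := i + 1) (by rwa [pow_apply_succ]) hb (by omega),
      ih (i := j + 1) (by rwa [pow_apply_succ]) ha (by omega), add_zero]

def nilSubalgebra : Subalgebra R A where
  carrier := {a | ∃ m, (D.toLinearMap ^ m) a = 0}
  mul_mem' := fun ⟨i, ha⟩ ⟨j, hb⟩ => ⟨i + j, D.pow_apply_mul_eq_zero ha hb⟩
  add_mem' := fun {a b} ⟨i, ha⟩ ⟨j, hb⟩ => ⟨i + j, by
    have ha' : (D.toLinearMap ^ (i + j)) a = 0 := by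
      rw [add_comm, pow_add, Module.End.mul_apply, ha, map_zero]
    have hb' : (D.toLinearMap ^ (i + j)) b = 0 := by
      rw [pow_add, Module.End.mul_apply, hb, map_zero]
    rw [map_add, ha', hb', add_zero]⟩
  algebraMap_mem' r := ⟨1, by simp⟩

theorem mem_nilSubalgebra_of_apply_mem {a : A} (h : D a ∈ D.nilSubalgebra) :
    a ∈ D.nilSubalgebra := by
  obtain ⟨m, hm⟩ := h
  exact ⟨m + 1, by rw [pow_apply_succ, hm]⟩

theorem mem_nilSubalgebra_of_apply_eq_zero {a : A} (h : D a = 0) : a ∈ D.nilSubalgebra :=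
  D.mem_nilSubalgebra_of_apply_mem (h ▸ D.nilSubalgebra.zero_mem)

end NilSubalgebra

section Quotient

variable {R A : Type*} [CommRing R] [CommRing A] [Algebra R A] (D : Derivation R A A)
  (I : Ideal A) (hI : ∀ a ∈ I, D a ∈ I)

noncomputable def quotient : Derivation R (A ⧸ I) (A ⧸ I) :=
  Derivation.mk'
    { toFun := Quotient.lift (fun a => Ideal.Quotient.mk I (D a)) fun a b hab =>
        Ideal.Quotient.eq.mpr (by
          simpa only [map_sub] using hI _ ((Submodule.quotientRel_def I).mp hab))
      map_add' := by
        rintro ⟨a⟩ ⟨b⟩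
        show Ideal.Quotient.mk I (D (a + b))
          = Ideal.Quotient.mk I (D a) + Ideal.Quotient.mk I (D b)
        rw [map_add, map_add]
      map_smul' := by
        rintro r ⟨a⟩
        show Ideal.Quotient.mk I (D (r • a)) = r • Ideal.Quotient.mk I (D a)
        rw [D.map_smul, Algebra.smul_def, map_mul, Ideal.Quotient.mk_algebraMap,
          ← Algebra.smul_def] }
    (by
      rintro ⟨a⟩ ⟨b⟩
      show Ideal.Quotient.mk I (D (a * b)) = _
      rw [D.leibniz]
      show _ = Ideal.Quotient.mk I a * Ideal.Quotient.mk I (D b)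
        + Ideal.Quotient.mk I b * Ideal.Quotient.mk I (D a)
      simp only [smul_eq_mul, map_add, map_mul])

@[simp]
theorem quotient_mk (a : A) :
    D.quotient I hI (Ideal.Quotient.mk I a) = Ideal.Quotient.mk I (D a) := rfl

theorem mk_mem_nilSubalgebra_quotient {a : A} (ha : a ∈ D.nilSubalgebra) :
    Ideal.Quotient.mk I a ∈ (D.quotient I hI).nilSubalgebra := by
  obtain ⟨m, hm⟩ := ha
  refine ⟨m, ?_⟩
  induction m generalizing a with
  | zero => simp_all
  | succ m ih => rw [pow_apply_succ, quotient_mk, ih (by rwa [pow_apply_succ] at hm)]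

end Quotient

end Derivation

namespace MvPolynomial

variable {σ R : Type*}

theorem mem_nilSubalgebra_of_mem_supported [CommSemiring R]
    {D : Derivation R (MvPolynomial σ R) (MvPolynomial σ R)} {s : Set σ}
    (hX : ∀ v ∈ s, X v ∈ D.nilSubalgebra) {p : MvPolynomial σ R} (hp : p ∈ supported R s) :
    p ∈ D.nilSubalgebra := by
  rw [supported_eq_adjoin_X] at hp
  exact Algebra.adjoin_le (Set.image_subset_iff.mpr hX) hp

variable [CommRing R]

/-- The Jacobian determinant `∂(g, f)/∂(u, t)`, as a derivation in `f`. -/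
noncomputable def jacobianDerivation (g : MvPolynomial σ R) (t u : σ) :
    Derivation R (MvPolynomial σ R) (MvPolynomial σ R) :=
  pderiv u g • pderiv t - pderiv t g • pderiv u

variable (g : MvPolynomial σ R) (t u : σ)

theorem jacobianDerivation_apply (f : MvPolynomial σ R) :
    jacobianDerivation g t u f = pderiv u g * pderiv t f - pderiv t g * pderiv u f :=
  rfl

theorem jacobianDerivation_self : jacobianDerivation g t u g = 0 := by
  rw [jacobianDerivation_apply, mul_comm, sub_self]

theorem jacobianDerivation_mem_span_singleton {f : MvPolynomial σ R}
    (hf : f ∈ Ideal.span {g}) : jacobianDerivation g t u f ∈ Ideal.span {g} := by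
  obtain ⟨c, rfl⟩ := Ideal.mem_span_singleton'.mp hf
  rw [Derivation.leibniz, jacobianDerivation_self, smul_zero, zero_add, smul_eq_mul]
  exact Ideal.mul_mem_right _ _ (Ideal.mem_span_singleton_self g)

theorem IsWeightedHomogeneous.jacobianDerivation {M : Type*} [AddCommGroup M] {w : σ → M}
    {d e : M} {f : MvPolynomial σ R} (hg : g.IsWeightedHomogeneous w d)
    (hf : f.IsWeightedHomogeneous w e) :
    (jacobianDerivation g t u f).IsWeightedHomogeneous w (e + (d - w t - w u)) := by
  rw [jacobianDerivation_apply]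
  have hut := (hg.pderiv (i := u) (n' := d - w u) (by abel)).mul
    (hf.pderiv (i := t) (n' := e - w t) (by abel))
  have htu := (hg.pderiv (i := t) (n' := d - w t) (by abel)).mul
    (hf.pderiv (i := u) (n' := e - w u) (by abel))
  rw [show e + (d - w t - w u) = d - w u + (e - w t) by abel]
  exact hut.sub (by convert htu using 1; abel)

variable {g t u}

theorem jacobianDerivation_X_of_ne {v : σ} (ht : v ≠ t) (hu : v ≠ u) :
    jacobianDerivation g t u (X v) = 0 := by
  rw [jacobianDerivation_apply, pderiv_X_of_ne ht, pderiv_X_of_ne hu, mul_zero,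
    mul_zero, sub_zero]

theorem jacobianDerivation_X_left (htu : t ≠ u) :
    jacobianDerivation g t u (X t) = pderiv u g := by
  rw [jacobianDerivation_apply, pderiv_X_self, pderiv_X_of_ne htu, mul_one, mul_zero,
    sub_zero]

theorem jacobianDerivation_X_right (htu : t ≠ u) :
    jacobianDerivation g t u (X u) = -pderiv t g := by
  rw [jacobianDerivation_apply, pderiv_X_self, pderiv_X_of_ne htu.symm, mul_one, mul_zero,
    zero_sub]

/-- The derivation is triangular: it kills `∂g/∂t`, sends `X u` to `-∂g/∂t`, and sends `X t`
into the subalgebra generated by the other variables. -/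
theorem mem_nilSubalgebra_jacobianDerivation (htu : t ≠ u) (ha : t ∉ (pderiv u g).vars)
    (hbt : t ∉ (pderiv t g).vars) (hbu : u ∉ (pderiv t g).vars) (p : MvPolynomial σ R) :
    p ∈ (jacobianDerivation g t u).nilSubalgebra := by
  set D := jacobianDerivation g t u
  have hX : ∀ v ∈ ({t}ᶜ : Set σ), X v ∈ D.nilSubalgebra := by
    intro v hvt
    by_cases hvu : v = u
    · subst hvu
      refine D.mem_nilSubalgebra_of_apply_mem ?_
      rw [jacobianDerivation_X_right htu]
      refine D.mem_nilSubalgebra_of_apply_eq_zero ?_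
      rw [map_neg, jacobianDerivation_apply, pderiv_eq_zero_of_notMem_vars hbt,
        pderiv_eq_zero_of_notMem_vars hbu, mul_zero, mul_zero, sub_zero, neg_zero]
    · exact D.mem_nilSubalgebra_of_apply_eq_zero (jacobianDerivation_X_of_ne hvt hvu)
  have hXt : X t ∈ D.nilSubalgebra := by
    refine D.mem_nilSubalgebra_of_apply_mem ?_
    rw [jacobianDerivation_X_left htu]
    exact mem_nilSubalgebra_of_mem_supported hX
      (mem_supported.mpr fun v hv (hvt : v = t) => ha (hvt ▸ hv))
  refine mem_nilSubalgebra_of_mem_supported (s := Set.univ) (fun v _ => ?_)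
    (by rw [supported_univ]; trivial)
  by_cases hvt : v = t
  · exact hvt ▸ hXt
  · exact hX v hvt

theorem pderiv_notMem_span_singleton [IsDomain R] (hne : pderiv t g ≠ 0)
    (ht : t ∉ (pderiv t g).vars) :
    pderiv t g ∉ Ideal.span {g} := by
  intro hmem
  obtain ⟨c, hc⟩ := Ideal.mem_span_singleton'.mp hmem
  have hg : t ∈ g.vars := by
    by_contra h
    exact hne (pderiv_eq_zero_of_notMem_vars h)
  have hc0 : c ≠ 0 := by rintro rfl; exact hne (by rw [← hc, zero_mul])
  have hg0 : g ≠ 0 := by rintro rfl; exact hne (by rw [← hc, mul_zero])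
  have hdeg := degreeOf_mul_eq (n := t) hc0 hg0
  rw [hc] at hdeg
  rw [mem_vars_iff_degreeOf_ne_zero] at ht hg
  omega

end MvPolynomial

section Trinomial

variable {K : Type*} [Field K] {n : Fin 3 → ℕ} {l : ∀ i : Fin 3, Fin (n i) → ℕ}

theorem monWeight_eq_weight {A : Type*} [AddCommGroup A] (w : TrinIdx n → A)
    (m : TrinIdx n →₀ ℕ) : monWeight w m = Finsupp.weight w m :=
  rfl

theorem isHomogDer_quotient {A : Type*} [AddCommGroup A] (w : TrinIdx n → A)
    (D : Derivation K (MvPolynomial (TrinIdx n) K) (MvPolynomial (TrinIdx n) K))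
    (hI : ∀ p ∈ Ideal.span {trinomial K n l}, D p ∈ Ideal.span {trinomial K n l}) (c : A)
    (hD : ∀ p e, p.IsWeightedHomogeneous w e → (D p).IsWeightedHomogeneous w (e + c)) :
    IsHomogDer K l w (D.quotient _ hI) := by
  refine ⟨c, fun e f ⟨p, hpf, hp⟩ => ⟨D p, by rw [← hpf]; rfl, fun m hm => ?_⟩⟩
  have hpe : p.IsWeightedHomogeneous w e := fun m hm =>
    (monWeight_eq_weight w m).symm.trans (hp m (mem_support_iff.mpr hm))
  exact (monWeight_eq_weight w m).trans (hD p e hpe (mem_support_iff.mp hm))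

noncomputable def trinomialExponent (n : Fin 3 → ℕ) (l : ∀ i : Fin 3, Fin (n i) → ℕ)
    (i : Fin 3) : TrinIdx n →₀ ℕ :=
  Finsupp.equivFunOnFinite.symm fun x => if x.1 = i then l x.1 x.2 else 0

theorem trinomialExponent_apply (i : Fin 3) (x : TrinIdx n) :
    trinomialExponent n l i x = if x.1 = i then l x.1 x.2 else 0 :=
  rfl

theorem trinomial_eq_sum_monomial :
    trinomial K n l = ∑ i, monomial (trinomialExponent n l i) 1 := by
  refine Finset.sum_congr rfl fun i _ => ?_
  rw [monomial_eq, C_1, one_mul, Finsupp.prod_fintype _ _ (fun _ => pow_zero _),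
    Fintype.prod_sigma, Finset.prod_eq_single i]
  · simp [trinomialExponent_apply]
  · intro a _ hai
    simp [trinomialExponent_apply, hai]
  · simp

theorem weight_trinDeg (m : TrinIdx n →₀ ℕ) :
    Finsupp.weight (trinDeg n l) m = trinQ n l fun x => (m x : ℤ) := by
  have hdeg : ∀ x, trinDeg n l x = Submodule.mkQ _ (Pi.single x 1) := fun _ => rfl
  rw [Finsupp.weight_eq_sum]
  simp only [hdeg, ← map_nsmul, ← map_sum]
  refine congrArg (Submodule.mkQ _) (funext fun y => ?_)
  simp [Finset.sum_apply, Pi.single_apply]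

theorem weight_trinDeg_trinomialExponent (i : Fin 3) :
    Finsupp.weight (trinDeg n l) (trinomialExponent n l i)
      = Finsupp.weight (trinDeg n l) (trinomialExponent n l 0) := by
  rw [weight_trinDeg, weight_trinDeg, trinQ, trinQ, Submodule.Quotient.eq]
  by_cases hi : i = 0
  · rw [hi, sub_self]
    exact Submodule.zero_mem _
  have hrow : (fun x => (trinomialExponent n l i x : ℤ))
      - (fun x => (trinomialExponent n l 0 x : ℤ)) = trinRow n l i := by
    funext x
    simp only [Pi.sub_apply, trinomialExponent_apply, trinRow]
    split_ifs <;> omega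
  rw [hrow]
  apply Submodule.subset_span
  fin_cases i <;> simp_all

theorem isWeightedHomogeneous_trinomial :
    (trinomial K n l).IsWeightedHomogeneous (trinDeg n l)
      (Finsupp.weight (trinDeg n l) (trinomialExponent n l 0)) := by
  rw [trinomial_eq_sum_monomial]
  exact IsWeightedHomogeneous.sum _ _ _ fun i _ =>
    isWeightedHomogeneous_monomial _ _ _ (weight_trinDeg_trinomialExponent i)

theorem pderiv_trinomial (x : TrinIdx n) :
    pderiv x (trinomial K n l)
      = monomial (trinomialExponent n l x.1 - Finsupp.single x 1) (l x.1 x.2 : K) := by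
  rw [trinomial_eq_sum_monomial, map_sum, Finset.sum_eq_single x.1]
  · rw [pderiv_monomial, one_mul, trinomialExponent_apply, if_pos rfl]
  · intro i _ hi
    rw [pderiv_monomial, trinomialExponent_apply, if_neg (Ne.symm hi), Nat.cast_zero, mul_zero,
      monomial_zero]
  · simp

theorem exponent_ne_zero_of_mem_vars_pderiv_trinomial {x y : TrinIdx n}
    (hy : y ∈ (pderiv x (trinomial K n l)).vars) :
    (trinomialExponent n l x.1 - Finsupp.single x 1 : TrinIdx n →₀ ℕ) y ≠ 0 := by
  obtain ⟨d, hd, hyd⟩ := (mem_vars_iff_mem_support _).mp hy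
  rw [pderiv_trinomial] at hd
  rw [Finset.mem_singleton.mp (support_monomial_subset hd)] at hyd
  exact Finsupp.mem_support_iff.mp hyd

theorem notMem_vars_pderiv_trinomial_of_fst_ne {x y : TrinIdx n} (h : y.1 ≠ x.1) :
    y ∉ (pderiv x (trinomial K n l)).vars := fun hy =>
  exponent_ne_zero_of_mem_vars_pderiv_trinomial hy (by
    rw [Finsupp.tsub_apply, trinomialExponent_apply, if_neg h, Nat.zero_sub])

theorem notMem_vars_pderiv_trinomial_self {x : TrinIdx n} (h : l x.1 x.2 = 1) :
    x ∉ (pderiv x (trinomial K n l)).vars := fun hx =>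
  exponent_ne_zero_of_mem_vars_pderiv_trinomial hx (by
    rw [Finsupp.tsub_apply, trinomialExponent_apply, if_pos rfl, h, Finsupp.single_eq_same])

theorem pderiv_trinomial_ne_zero {x : TrinIdx n} (h : l x.1 x.2 = 1) :
    pderiv x (trinomial K n l) ≠ 0 := by
  rw [pderiv_trinomial, h, Nat.cast_one, Ne, monomial_eq_zero]
  exact one_ne_zero

end Trinomial

theorem exists_homogeneous_lnd_of_exponent_one_general (K : Type*) [Field K]
    (n : Fin 3 → ℕ) (l : ∀ i : Fin 3, Fin (n i) → ℕ)
    (hn : ∀ i, 0 < n i)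
    (hone : ∃ i j, l i j = 1) :
    ∃ δ : Derivation K (TrinAlg K n l) (TrinAlg K n l),
      δ ≠ 0 ∧ IsLND K l δ ∧ IsHomogDer K l (trinDeg n l) δ := by
  obtain ⟨i, j, h1⟩ := hone
  obtain ⟨i', hi'⟩ : ∃ i' : Fin 3, i' ≠ i := ⟨i + 1, by omega⟩
  let t : TrinIdx n := ⟨i, j⟩
  let u : TrinIdx n := ⟨i', ⟨0, hn i'⟩⟩
  have htu : t ≠ u := fun h => hi' (congrArg Sigma.fst h).symm
  let D := jacobianDerivation (trinomial K n l) t u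
  have hI : ∀ p ∈ Ideal.span {trinomial K n l}, D p ∈ Ideal.span {trinomial K n l} :=
    fun _ => jacobianDerivation_mem_span_singleton _ t u
  refine ⟨D.quotient _ hI, fun hzero => ?_, fun f => ?_,
    isHomogDer_quotient _ D hI _ fun _ _ hp => isWeightedHomogeneous_trinomial.jacobianDerivation
      _ t u hp⟩
  · have hXu := congrArg (· (Ideal.Quotient.mk _ (X u))) hzero
    simp only [Derivation.quotient_mk, jacobianDerivation_X_right htu, map_neg,
      Derivation.zero_apply, neg_eq_zero, Ideal.Quotient.eq_zero_iff_mem, D] at hXu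
    exact pderiv_notMem_span_singleton (pderiv_trinomial_ne_zero h1)
      (notMem_vars_pderiv_trinomial_self h1) hXu
  · obtain ⟨p, rfl⟩ := Ideal.Quotient.mk_surjective f
    exact D.mk_mem_nilSubalgebra_quotient _ hI <| mem_nilSubalgebra_jacobianDerivation htu
      (notMem_vars_pderiv_trinomial_of_fst_ne hi'.symm) (notMem_vars_pderiv_trinomial_self h1)
      (notMem_vars_pderiv_trinomial_of_fst_ne hi') p

/-- If some exponent `l_{ij}` of the trinomial `g` equals `1`, then the trinomial algebra
`R(g)` admits a nonzero locally nilpotent derivation homogeneous with respect to the finest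
grading by `ℤⁿ/Im(L*)`. -/
theorem exists_homogeneous_lnd_of_exponent_one (K : Type*) [Field K] [IsAlgClosed K]
    [CharZero K] (n : Fin 3 → ℕ) (l : ∀ i : Fin 3, Fin (n i) → ℕ)
    (hn : ∀ i, 0 < n i) (hl : ∀ i j, 0 < l i j)
    (hone : ∃ i j, l i j = 1) :
    ∃ δ : Derivation K (TrinAlg K n l) (TrinAlg K n l),
      δ ≠ 0 ∧ IsLND K l δ ∧ IsHomogDer K l (trinDeg n l) δ :=
  exists_homogeneous_lnd_of_exponent_one_general K n l hn hone
end
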